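/- In any minimal conformation of length N > 6, every occurrence of a type-2 window in the interior of the type sequence appears in the pattern α = →1→2←2←1; precisely, if window Γ_i has directed type →2 or ←2 and 4 ≤ i ≤ N−3, then the four consecutive windows containing this occurrence of the pair of 2's form the subword →1→2←2←1 (truncated only at the two ends of the type sequence), and the portion of the type sequence containing no type-2 windows consists of repetitions of β = →1←1. -/

import Mathlib

/-- Points of the cubic lattice `ℤ³`. -/
abbrev P3 : Type := Fin 3 → ℤ

def e1 : P3 := ![1, 0, 0]
def e2 : P3 := ![0, 1, 0]
def e3 : P3 := ![0, 0, 1]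

/-- Squared Euclidean norm of an integer vector; it equals `1` iff the
Euclidean norm equals `1`. -/
def sqNorm (v : P3) : ℤ := ∑ k, (v k) ^ 2

/-- A conformation of length `N`: an injective map on `{1, …, N}` whose
consecutive steps have Euclidean length one. -/
def IsConformation (N : ℕ) (Γ : ℕ → P3) : Prop :=
  Set.InjOn Γ (Set.Icc 1 N) ∧ ∀ i, 1 ≤ i → i < N → sqNorm (Γ (i + 1) - Γ i) = 1

/-- A lattice rotation: an orthogonal integer matrix of determinant one
(equivalently, a linear isometry of `ℝ³` mapping `ℤ³` onto `ℤ³` with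
determinant one). -/
def IsLatticeRotation (R : Matrix (Fin 3) (Fin 3) ℤ) : Prop :=
  R.transpose * R = 1 ∧ R.det = 1

/-- Equivalence of length-5 conformations: `Δ' k = R (Δ k) + t` for a lattice
rotation `R` and translation `t ∈ ℤ³`. -/
def Equiv5 (Δ Δ' : Fin 5 → P3) : Prop :=
  ∃ (R : Matrix (Fin 3) (Fin 3) ℤ) (t : P3),
    IsLatticeRotation R ∧ ∀ k, Δ' k = R.mulVec (Δ k) + t

/-- Reversal of a length-5 conformation (`k ↦ Δ (6 - k)` in 1-based indexing). -/
def rev5 (Δ : Fin 5 → P3) : Fin 5 → P3 := fun k => Δ k.rev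

/-- Conformation 1: vertices (0,0,0), (1,0,0), (1,1,0), (0,1,0), (0,1,1). -/
def conf1 : Fin 5 → P3 := ![![0, 0, 0], ![1, 0, 0], ![1, 1, 0], ![0, 1, 0], ![0, 1, 1]]

/-- Conformation 2: vertices (0,0,0), (0,1,0), (−1,1,0), (−1,1,1), (−1,0,1). -/
def conf2 : Fin 5 → P3 := ![![0, 0, 0], ![0, 1, 0], ![-1, 1, 0], ![-1, 1, 1], ![-1, 0, 1]]

/-- The `i`-th window of `Γ`: the 5-tuple `(Γ(i-2), …, Γ(i+2))`. -/
def window (Γ : ℕ → P3) (i : ℕ) : Fin 5 → P3 := fun k => Γ (i - 2 + (k : ℕ))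

/-- `Φ(Δ) = 1`: the 5-tuple `Δ` or its reversal is equivalent to
conformation 1 or to conformation 2. -/
def WindowGood (Δ : Fin 5 → P3) : Prop :=
  Equiv5 Δ conf1 ∨ Equiv5 (rev5 Δ) conf1 ∨ Equiv5 Δ conf2 ∨ Equiv5 (rev5 Δ) conf2

open Classical in
/-- The function `Φ` on length-5 conformations. -/
noncomputable def Phi (Δ : Fin 5 → P3) : ℤ := if WindowGood Δ then 1 else 0

/-- The energy `E₅(Γ) = −Σ_{i=3}^{N−2} Φ(Γ_i)`. -/
noncomputable def E5 (N : ℕ) (Γ : ℕ → P3) : ℤ :=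
  -∑ i ∈ Finset.Icc 3 (N - 2), Phi (window Γ i)

/-- A minimal conformation: a conformation all of whose windows satisfy `Φ = 1`. -/
def IsMinimal (N : ℕ) (Γ : ℕ → P3) : Prop :=
  IsConformation N Γ ∧ ∀ i, 3 ≤ i → i ≤ N - 2 → WindowGood (window Γ i)

/-- The walk starting at the origin (in 1-based indexing) whose steps
cyclically repeat the given list. -/
def cyclicWalk (steps : List P3) : ℕ → P3
  | 0 => 0
  | 1 => 0
  | n + 2 => cyclicWalk steps (n + 1) + steps.getD (n % steps.length) 0

/-- The 16-term step sequence of the lattice α-helix. -/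
def alphaStepList : List P3 :=
  [e1, e2, -e1, e3, -e2, e1, e2, e3, -e1, -e2, e1, e3, e2, -e1, -e2, e3]

/-- The 4-term step sequence of the lattice β-strand. -/
def betaStepList : List P3 := [e1, e2, -e1, e3]

/-- The lattice α-helix (`H(1) = 0`, steps cyclically repeating `alphaStepList`). -/
def alphaHelix : ℕ → P3 := cyclicWalk alphaStepList

/-- The lattice β-strand (`B(1) = 0`, steps cyclically repeating `betaStepList`). -/
def betaStrand : ℕ → P3 := cyclicWalk betaStepList

/-- The four directed types of windows. -/
inductive DType : Type
  | r1  -- →1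
  | l1  -- ←1
  | r2  -- →2
  | l2  -- ←2
deriving DecidableEq

/-- A window `Δ` has directed type `→1` (resp. `→2`) if it is equivalent to
conformation 1 (resp. 2), and `←1` (resp. `←2`) if its reversal is. -/
def HasType (Δ : Fin 5 → P3) : DType → Prop
  | DType.r1 => Equiv5 Δ conf1
  | DType.l1 => Equiv5 (rev5 Δ) conf1
  | DType.r2 => Equiv5 Δ conf2
  | DType.l2 => Equiv5 (rev5 Δ) conf2

/-- The six allowed ordered pairs of directed types of consecutive windows:
(→1,←1), (←1,→1), (→1,→2), (→2,←2), (←2,←1), (←2,→2). -/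
def allowedPairs : List (DType × DType) :=
  [(DType.r1, DType.l1), (DType.l1, DType.r1), (DType.r1, DType.r2),
   (DType.r2, DType.l2), (DType.l2, DType.l1), (DType.l2, DType.r2)]

/-- `w` is the type sequence of `Γ` (a conformation of length `N`):
`w` has length `N − 4` and its `j`-th letter is the directed type of the
window `Γ_{3+j}`, `j = 0, …, N−5`. -/
def HasTypeSeq (N : ℕ) (Γ : ℕ → P3) (w : List DType) : Prop :=
  w.length = N - 4 ∧ ∀ j (h : j < w.length), HasType (window Γ (3 + j)) (w.get ⟨j, h⟩)

/-- The word `α = →1→2←2←1`. -/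
def wordAlpha : List DType := [DType.r1, DType.r2, DType.l2, DType.l1]

/-- The word `β = →1←1`. -/
def wordBeta : List DType := [DType.r1, DType.l1]

/-- `v` is a finite concatenation of copies of the words `α` and `β`. -/
def IsABConcat (v : List DType) : Prop :=
  ∃ L : List (List DType), (∀ u ∈ L, u = wordAlpha ∨ u = wordBeta) ∧ v = L.flatten

/-- A word is admissible if it is a contiguous subword (factor) of some finite
concatenation of copies of `α` and `β`. -/
def Admissible (w : List DType) : Prop := ∃ v, IsABConcat v ∧ w <:+: v

/-- The two kinds of monomers. -/
inductive AB : Type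
  | A
  | B
deriving DecidableEq

/-- The number of occurrences of the letter `c` in the `i`-th 5-tuple
`S(i−2), …, S(i+2)` of the sequence `S`. -/
def countLetter (c : AB) (S : ℕ → AB) (i : ℕ) : ℕ :=
  ((Finset.Icc (i - 2) (i + 2)).filter fun k => S k = c).card

open Classical in
/-- `Φ₁(Δ) = 1` iff `Δ` or its reversal is equivalent to conformation 1. -/
noncomputable def Phi1 (Δ : Fin 5 → P3) : ℝ :=
  if Equiv5 Δ conf1 ∨ Equiv5 (rev5 Δ) conf1 then 1 else 0

open Classical in
/-- `Φ₂(Δ) = 1` iff `Δ` or its reversal is equivalent to conformation 2. -/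
noncomputable def Phi2 (Δ : Fin 5 → P3) : ℝ :=
  if Equiv5 Δ conf2 ∨ Equiv5 (rev5 Δ) conf2 then 1 else 0

/-- The heteropolymer energy
`E₅′(S,Γ) = −Σᵢ [#_B(Sᵢ)(Φ₁(Γᵢ) + ε Φ₂(Γᵢ)) + #_A(Sᵢ)(Φ₂(Γᵢ) + ε Φ₁(Γᵢ))]`. -/
noncomputable def E5' (ε : ℝ) (S : ℕ → AB) (N : ℕ) (Γ : ℕ → P3) : ℝ :=
  -∑ i ∈ Finset.Icc 3 (N - 2),
    ((countLetter AB.B S i : ℝ) * (Phi1 (window Γ i) + ε * Phi2 (window Γ i)) +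
      (countLetter AB.A S i : ℝ) * (Phi2 (window Γ i) + ε * Phi1 (window Γ i)))

/-
A window's directed type fixes its four unit steps up to a lattice rotation, hence fixes the
dot products and the triple product of any three of them (`Rᵀ R = 1`, `det R = 1`).
Consecutive windows share three steps; comparing these invariants on the last three steps of
one reference conformation and the first three of the next leaves exactly the six pairs of
`allowedPairs`. In a type-2 window the last step reverses the first, so three consecutive
type-2 windows would close a loop of six steps, which injectivity forbids. Following the
allowed pairs outward from a type-2 window then forces the pattern `→1→2←2←1`, and two
adjacent type-1 windows alternate.
-/

open Matrix

section Rotation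

variable {n α : Type*} [Fintype n] [DecidableEq n] [CommRing α] {R : Matrix n n α}

theorem Matrix.mulVec_dotProduct_mulVec_of_transpose_mul_self (hR : Rᵀ * R = 1) (u v : n → α) :
    R *ᵥ u ⬝ᵥ R *ᵥ v = u ⬝ᵥ v := by
  rw [dotProduct_mulVec, ← vecMul_transpose, vecMul_vecMul, hR, vecMul_one]

theorem Matrix.transpose_mulVec_mulVec_of_transpose_mul_self (hR : Rᵀ * R = 1) (u : n → α) :
    Rᵀ *ᵥ (R *ᵥ u) = u := by
  rw [mulVec_mulVec, hR, one_mulVec]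

end Rotation

theorem Matrix.mulVec_dotProduct_cross_mulVec {α : Type*} [CommRing α]
    (R : Matrix (Fin 3) (Fin 3) α) (u v w : Fin 3 → α) :
    R *ᵥ u ⬝ᵥ ((R *ᵥ v) ⨯₃ (R *ᵥ w)) = R.det * (u ⬝ᵥ (v ⨯₃ w)) := by
  have hrows : ![R *ᵥ u, R *ᵥ v, R *ᵥ w] = of ![u, v, w] * Rᵀ := by
    ext i : 1
    rw [mul_apply_eq_vecMul, vecMul_transpose]
    fin_cases i <;> rfl
  rw [triple_product_eq_det, triple_product_eq_det, hrows, det_mul, det_transpose, mul_comm]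
  rfl

def step (Δ : Fin 5 → P3) (j : Fin 4) : P3 := Δ j.succ - Δ j.castSucc

def frameInvariants (u v w : P3) : ℤ × ℤ × ℤ × ℤ :=
  (u ⬝ᵥ v, u ⬝ᵥ w, v ⬝ᵥ w, u ⬝ᵥ (v ⨯₃ w))

theorem frameInvariants_mulVec {R : Matrix (Fin 3) (Fin 3) ℤ} (hR : IsLatticeRotation R)
    (u v w : P3) : frameInvariants (R *ᵥ u) (R *ᵥ v) (R *ᵥ w) = frameInvariants u v w := by
  simp only [frameInvariants, mulVec_dotProduct_mulVec_of_transpose_mul_self hR.1,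
    mulVec_dotProduct_cross_mulVec, hR.2, one_mul]

namespace Equiv5

variable {Δ Δ' : Fin 5 → P3}

theorem exists_step_eq_mulVec (h : Equiv5 Δ Δ') :
    ∃ R, IsLatticeRotation R ∧ ∀ j, step Δ' j = R *ᵥ step Δ j := by
  obtain ⟨R, t, hR, hΔ⟩ := h
  exact ⟨R, hR, fun j => by simp only [step, hΔ, mulVec_sub, add_sub_add_right_eq_sub]⟩

theorem frameInvariants_step (h : Equiv5 Δ Δ') (a b c : Fin 4) :
    frameInvariants (step Δ' a) (step Δ' b) (step Δ' c) =
      frameInvariants (step Δ a) (step Δ b) (step Δ c) := by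
  obtain ⟨R, hR, hstep⟩ := h.exists_step_eq_mulVec
  rw [hstep, hstep, hstep, frameInvariants_mulVec hR]

theorem step_eq_neg (h : Equiv5 Δ Δ') {a b : Fin 4} (hab : step Δ' a = -step Δ' b) :
    step Δ a = -step Δ b := by
  obtain ⟨R, hR, hstep⟩ := h.exists_step_eq_mulVec
  rw [← transpose_mulVec_mulVec_of_transpose_mul_self hR.1 (step Δ a),
    ← transpose_mulVec_mulVec_of_transpose_mul_self hR.1 (step Δ b), ← hstep, ← hstep, hab,
    mulVec_neg]

theorem rev5 (h : Equiv5 Δ Δ') : Equiv5 (rev5 Δ) (rev5 Δ') := by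
  obtain ⟨R, t, hR, hΔ⟩ := h
  exact ⟨R, t, hR, fun k => hΔ k.rev⟩

end Equiv5

theorem rev5_rev5 (Δ : Fin 5 → P3) : rev5 (rev5 Δ) = Δ := by
  funext k
  simp only [rev5, Fin.rev_rev]

def DType.IsTwo (t : DType) : Prop := t = .r2 ∨ t = .l2

def DType.conf : DType → Fin 5 → P3
  | .r1 => conf1
  | .l1 => rev5 conf1
  | .r2 => conf2
  | .l2 => rev5 conf2

theorem HasType.equiv5_conf {Δ : Fin 5 → P3} {t : DType} (h : HasType Δ t) :
    Equiv5 Δ t.conf := by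
  cases t
  case r1 | r2 => exact h
  case l1 | l2 => simpa only [DType.conf, rev5_rev5] using h.rev5

theorem WindowGood.exists_hasType {Δ : Fin 5 → P3} (h : WindowGood Δ) :
    ∃ t, HasType Δ t := by
  rcases h with h | h | h | h
  exacts [⟨.r1, h⟩, ⟨.l1, h⟩, ⟨.r2, h⟩, ⟨.l2, h⟩]

theorem mem_allowedPairs_of_frameInvariants_eq (s t : DType)
    (h : frameInvariants (step s.conf 1) (step s.conf 2) (step s.conf 3) =
      frameInvariants (step t.conf 0) (step t.conf 1) (step t.conf 2)) :
    (s, t) ∈ allowedPairs := by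
  revert h
  cases s <;> cases t <;> decide

theorem step_conf_three_eq_neg {t : DType} (ht : t.IsTwo) :
    step t.conf 3 = -step t.conf 0 := by
  rcases ht with rfl | rfl <;> decide

theorem eq_l2_of_r2_mem_allowedPairs (t : DType) :
    (.r2, t) ∈ allowedPairs → t = .l2 := by
  cases t <;> decide

theorem eq_r2_of_mem_allowedPairs_l2 (s : DType) : (s, .l2) ∈ allowedPairs → s = .r2 := by
  cases s <;> decide

theorem eq_l1_or_r2_of_l2_mem_allowedPairs (t : DType) :
    (.l2, t) ∈ allowedPairs → t = .l1 ∨ t = .r2 := by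
  cases t <;> decide

theorem eq_r1_or_l2_of_mem_allowedPairs_r2 (s : DType) :
    (s, .r2) ∈ allowedPairs → s = .r1 ∨ s = .l2 := by
  cases s <;> decide

section Windows

variable {Γ : ℕ → P3}

theorem step_window (Γ : ℕ → P3) (m : ℕ) (j : Fin 4) :
    step (window Γ (m + 2)) j = Γ (m + j + 1) - Γ (m + j) := by
  simp only [step, window, Nat.add_sub_cancel, Fin.val_succ, Fin.val_castSucc, add_assoc]

theorem step_window_succ (Γ : ℕ → P3) {i : ℕ} (hi : 2 ≤ i) (j : Fin 3) :
    step (window Γ (i + 1)) j.castSucc = step (window Γ i) j.succ := by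
  obtain ⟨m, rfl⟩ := Nat.exists_eq_add_of_le' hi
  rw [show m + 2 + 1 = (m + 1) + 2 by omega, step_window, step_window]
  simp only [Fin.val_castSucc, Fin.val_succ]
  ring_nf

theorem mem_allowedPairs_of_hasType_window {i : ℕ} (hi : 2 ≤ i) {s t : DType}
    (hs : HasType (window Γ i) s) (ht : HasType (window Γ (i + 1)) t) :
    (s, t) ∈ allowedPairs := by
  apply mem_allowedPairs_of_frameInvariants_eq
  rw [hs.equiv5_conf.frameInvariants_step, ht.equiv5_conf.frameInvariants_step]
  have h := step_window_succ Γ hi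
  exact (congr (congr (congrArg frameInvariants (h 0)) (h 1)) (h 2)).symm

theorem last_step_window_eq_neg_first_of_isTwo {m : ℕ} {t : DType} (ht : t.IsTwo)
    (h : HasType (window Γ (m + 2)) t) :
    Γ (m + 4) - Γ (m + 3) = -(Γ (m + 1) - Γ m) := by
  simpa [step_window, add_assoc] using h.equiv5_conf.step_eq_neg (step_conf_three_eq_neg ht)

end Windows

theorem IsConformation.not_isTwo_three_consecutive {N : ℕ} {Γ : ℕ → P3}
    (hΓ : IsConformation N Γ) {i : ℕ} (h3 : 3 ≤ i) (hN : i + 4 ≤ N) {s t u : DType}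
    (hs2 : s.IsTwo) (ht2 : t.IsTwo) (hu2 : u.IsTwo) (hs : HasType (window Γ i) s)
    (ht : HasType (window Γ (i + 1)) t) (hu : HasType (window Γ (i + 2)) u) : False := by
  obtain ⟨m, rfl⟩ : ∃ m, i = m + 1 + 2 := ⟨i - 3, by omega⟩
  have e1 := last_step_window_eq_neg_first_of_isTwo hs2 hs
  have e2 := last_step_window_eq_neg_first_of_isTwo (m := m + 2) ht2 ht
  have e3 := last_step_window_eq_neg_first_of_isTwo (m := m + 3) hu2 hu
  have hloop : Γ (m + 7) = Γ (m + 1) := by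
    rw [← sub_eq_zero]
    calc Γ (m + 7) - Γ (m + 1)
        = (Γ (m + 1 + 4) - Γ (m + 1 + 3) + (Γ (m + 1 + 1) - Γ (m + 1))) +
          (Γ (m + 2 + 4) - Γ (m + 2 + 3) + (Γ (m + 2 + 1) - Γ (m + 2))) +
          (Γ (m + 3 + 4) - Γ (m + 3 + 3) + (Γ (m + 3 + 1) - Γ (m + 3))) := by abel
      _ = 0 := by rw [e1, e2, e3]; abel
  have := hΓ.1 ⟨by omega, by omega⟩ ⟨by omega, by omega⟩ hloop
  omega

namespace IsMinimal

variable {N : ℕ} {Γ : ℕ → P3}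

theorem exists_hasType (hΓ : IsMinimal N Γ) {i : ℕ} (h3 : 3 ≤ i) (hN : i ≤ N - 2) :
    ∃ t, HasType (window Γ i) t :=
  (hΓ.2 i h3 hN).exists_hasType

theorem hasType_around_r2 (hΓ : IsMinimal N Γ) {i : ℕ} (h4 : 4 ≤ i) (hi : i ≤ N - 3)
    (h : HasType (window Γ i) .r2) :
    HasType (window Γ (i - 1)) .r1 ∧ HasType (window Γ (i + 1)) .l2 ∧
      (i + 2 ≤ N - 2 → HasType (window Γ (i + 2)) .l1) := by
  obtain ⟨m, rfl⟩ : ∃ m, i = m + 1 + 3 := ⟨i - 4, by omega⟩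
  obtain ⟨s, hs⟩ := hΓ.exists_hasType (i := m + 3) (by omega) (by omega)
  obtain ⟨t, ht⟩ := hΓ.exists_hasType (i := m + 5) (by omega) (by omega)
  obtain rfl := eq_l2_of_r2_mem_allowedPairs t (mem_allowedPairs_of_hasType_window (by omega) h ht)
  rcases eq_r1_or_l2_of_mem_allowedPairs_r2 s (mem_allowedPairs_of_hasType_window (by omega) hs h)
    with rfl | rfl
  case inr =>
    exact (hΓ.1.not_isTwo_three_consecutive (by omega) (by omega) (.inr rfl) (.inl rfl)
      (.inr rfl) hs h ht).elim
  refine ⟨hs, ht, fun hN => ?_⟩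
  obtain ⟨u, hu⟩ := hΓ.exists_hasType (i := m + 6) (by omega) hN
  rcases eq_l1_or_r2_of_l2_mem_allowedPairs u
      (mem_allowedPairs_of_hasType_window (by omega) ht hu) with rfl | rfl
  · exact hu
  · exact (hΓ.1.not_isTwo_three_consecutive (by omega) (by omega) (.inl rfl) (.inr rfl)
      (.inl rfl) h ht hu).elim

theorem hasType_around_l2 (hΓ : IsMinimal N Γ) {i : ℕ} (h4 : 4 ≤ i) (hi : i ≤ N - 3)
    (h : HasType (window Γ i) .l2) :
    HasType (window Γ (i - 1)) .r2 ∧ HasType (window Γ (i + 1)) .l1 ∧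
      (3 ≤ i - 2 → HasType (window Γ (i - 2)) .r1) := by
  obtain ⟨m, rfl⟩ : ∃ m, i = m + 1 + 3 := ⟨i - 4, by omega⟩
  obtain ⟨s, hs⟩ := hΓ.exists_hasType (i := m + 3) (by omega) (by omega)
  obtain ⟨t, ht⟩ := hΓ.exists_hasType (i := m + 5) (by omega) (by omega)
  obtain rfl := eq_r2_of_mem_allowedPairs_l2 s (mem_allowedPairs_of_hasType_window (by omega) hs h)
  rcases eq_l1_or_r2_of_l2_mem_allowedPairs t (mem_allowedPairs_of_hasType_window (by omega) h ht)
    with rfl | rfl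
  case inr =>
    exact (hΓ.1.not_isTwo_three_consecutive (by omega) (by omega) (.inl rfl) (.inr rfl)
      (.inl rfl) hs h ht).elim
  refine ⟨hs, ht, fun h3 => ?_⟩
  obtain ⟨w, hw⟩ := hΓ.exists_hasType (i := m + 2) h3 (by omega)
  rcases eq_r1_or_l2_of_mem_allowedPairs_r2 w (mem_allowedPairs_of_hasType_window (by omega) hw hs)
    with rfl | rfl
  · exact hw
  · exact (hΓ.1.not_isTwo_three_consecutive (by omega) (by omega) (.inr rfl) (.inl rfl)
      (.inr rfl) hw hs h).elim

end IsMinimal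

theorem hasType_window_succ_alternates {Γ : ℕ → P3} {i : ℕ} (h2 : 2 ≤ i)
    (h : HasType (window Γ i) .r1 ∨ HasType (window Γ i) .l1)
    (h' : HasType (window Γ (i + 1)) .r1 ∨ HasType (window Γ (i + 1)) .l1) :
    (HasType (window Γ i) .r1 ∧ HasType (window Γ (i + 1)) .l1) ∨
      (HasType (window Γ i) .l1 ∧ HasType (window Γ (i + 1)) .r1) := by
  rcases h with h | h <;> rcases h' with h' | h'
  · exact absurd (mem_allowedPairs_of_hasType_window h2 h h') (by decide)
  · exact .inl ⟨h, h'⟩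
  · exact .inr ⟨h, h'⟩
  · exact absurd (mem_allowedPairs_of_hasType_window h2 h h') (by decide)

theorem type2_occurs_in_alpha_pattern_general (N : ℕ) (Γ : ℕ → P3)
    (hΓ : IsMinimal N Γ) :
    (∀ i, 4 ≤ i → i ≤ N - 3 → HasType (window Γ i) DType.r2 →
      HasType (window Γ (i - 1)) DType.r1 ∧ HasType (window Γ (i + 1)) DType.l2 ∧
        (i + 2 ≤ N - 2 → HasType (window Γ (i + 2)) DType.l1)) ∧
    (∀ i, 4 ≤ i → i ≤ N - 3 → HasType (window Γ i) DType.l2 →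
      HasType (window Γ (i - 1)) DType.r2 ∧ HasType (window Γ (i + 1)) DType.l1 ∧
        (3 ≤ i - 2 → HasType (window Γ (i - 2)) DType.r1)) ∧
    (∀ i, 3 ≤ i → i + 1 ≤ N - 2 →
      (HasType (window Γ i) DType.r1 ∨ HasType (window Γ i) DType.l1) →
      (HasType (window Γ (i + 1)) DType.r1 ∨ HasType (window Γ (i + 1)) DType.l1) →
      (HasType (window Γ i) DType.r1 ∧ HasType (window Γ (i + 1)) DType.l1) ∨
        (HasType (window Γ i) DType.l1 ∧ HasType (window Γ (i + 1)) DType.r1)) :=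
  ⟨fun _ h4 hi => hΓ.hasType_around_r2 h4 hi, fun _ h4 hi => hΓ.hasType_around_l2 h4 hi,
    fun _ h3 _ => hasType_window_succ_alternates (by omega)⟩

/-- in a minimal conformation of length `N > 6`, every interior
occurrence of a type-2 window appears inside the pattern `α = →1→2←2←1`
(truncated only at the two ends of the type sequence), and consecutive type-1
windows alternate as in repetitions of `β = →1←1`. -/
theorem type2_occurs_in_alpha_pattern (N : ℕ) (hN : 6 < N) (Γ : ℕ → P3)
    (hΓ : IsMinimal N Γ) :
    (∀ i, 4 ≤ i → i ≤ N - 3 → HasType (window Γ i) DType.r2 →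
      HasType (window Γ (i - 1)) DType.r1 ∧ HasType (window Γ (i + 1)) DType.l2 ∧
        (i + 2 ≤ N - 2 → HasType (window Γ (i + 2)) DType.l1)) ∧
    (∀ i, 4 ≤ i → i ≤ N - 3 → HasType (window Γ i) DType.l2 →
      HasType (window Γ (i - 1)) DType.r2 ∧ HasType (window Γ (i + 1)) DType.l1 ∧
        (3 ≤ i - 2 → HasType (window Γ (i - 2)) DType.r1)) ∧
    (∀ i, 3 ≤ i → i + 1 ≤ N - 2 →
      (HasType (window Γ i) DType.r1 ∨ HasType (window Γ i) DType.l1) →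
      (HasType (window Γ (i + 1)) DType.r1 ∨ HasType (window Γ (i + 1)) DType.l1) →
      (HasType (window Γ i) DType.r1 ∧ HasType (window Γ (i + 1)) DType.l1) ∨
        (HasType (window Γ i) DType.l1 ∧ HasType (window Γ (i + 1)) DType.r1)) :=
  type2_occurs_in_alpha_pattern_general N Γ hΓ
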